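/- Every short exact sequence of I₁-modules 0 → K[x] → N → K[x] → 0 splits, and consequently N ≅ K[x] ⊕ K[x]; that is, Ext¹_{I₁}(K[x], K[x]) = 0. -/

import Mathlib

open Polynomial

set_option synthInstance.maxHeartbeats 1000000
set_option maxHeartbeats 1000000

/-- Multiplication by `x` on `K[x]`. -/
noncomputable def xOp (K : Type) [Field K] : Module.End K (Polynomial K) :=
  LinearMap.mulLeft K (X : Polynomial K)

/-- Formal derivative `d/dx` on `K[x]`. -/
noncomputable def derOp (K : Type) [Field K] : Module.End K (Polynomial K) :=
  Polynomial.derivative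

/-- Integration on `K[x]`: determined by `x^n ↦ x^(n+1)/(n+1)`. -/
noncomputable def intOp (K : Type) [Field K] [CharZero K] : Module.End K (Polynomial K) :=
  Polynomial.lsum fun n => (((n : K) + 1)⁻¹) • (Polynomial.monomial (n + 1) : K →ₗ[K] Polynomial K)

/-- The algebra `I₁ = K⟨x, d/dx, ∫⟩` of polynomial integro-differential operators. -/
noncomputable def I1 (K : Type) [Field K] [CharZero K] :
    Subalgebra K (Module.End K (Polynomial K)) :=
  Algebra.adjoin K {xOp K, derOp K, intOp K}

noncomputable instance I1.instRing (K : Type) [Field K] [CharZero K] : Ring (I1 K) :=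
  inferInstance
noncomputable instance I1.instAlgebra (K : Type) [Field K] [CharZero K] : Algebra K (I1 K) :=
  inferInstance
noncomputable instance I1.instAddCommGroup (K : Type) [Field K] [CharZero K] :
    AddCommGroup (I1 K) := inferInstance
noncomputable instance I1.instModuleK (K : Type) [Field K] [CharZero K] : Module K (I1 K) :=
  inferInstance

/-- `K[x]` is an `I₁`-module via the inclusion `I₁ ⊆ End_K(K[x])`. -/
noncomputable instance I1.instModulePoly (K : Type) [Field K] [CharZero K] :
    Module (I1 K) (Polynomial K) :=
  Module.compHom (Polynomial K) (Subalgebra.val (I1 K)).toRingHom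

instance I1.instTowerPoly (K : Type) [Field K] [CharZero K] :
    IsScalarTower K (I1 K) (Polynomial K) :=
  ⟨fun c a p => by
    show ((c • a : I1 K) : Module.End K (Polynomial K)) p
        = c • ((a : Module.End K (Polynomial K)) p)
    simp⟩

/-- The element `H = ∂x` of `I₁`. -/
noncomputable def Hop (K : Type) [Field K] [CharZero K] : I1 K :=
  ⟨derOp K * xOp K,
    mul_mem (Algebra.subset_adjoin (by simp)) (Algebra.subset_adjoin (by simp))⟩

/-- The element `1 - ∫∂` of `I₁`. -/
noncomputable def eElt (K : Type) [Field K] [CharZero K] : I1 K :=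
  1 - (⟨intOp K, Algebra.subset_adjoin (by simp)⟩ : I1 K) *
      (⟨derOp K, Algebra.subset_adjoin (by simp)⟩ : I1 K)

/-- The two-sided ideal `F` of `I₁` generated by `1 - ∫∂`, regarded as a left ideal. -/
noncomputable def Fideal (K : Type) [Field K] [CharZero K] : Ideal (I1 K) :=
  Ideal.span {y | ∃ a b : I1 K, y = a * eElt K * b}

/-- The left ideal `F + I₁(H-λ)^n` of `I₁`. -/
noncomputable def Msub (K : Type) [Field K] [CharZero K] (n : ℕ) (lam : K) : Ideal (I1 K) :=
  Fideal K ⊔ Ideal.span {(Hop K - algebraMap K (I1 K) lam) ^ n}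

/-- The left `I₁`-module `M(n,λ) = I₁/(F + I₁(H-λ)^n)`. -/
abbrev Mmod (K : Type) [Field K] [CharZero K] (n : ℕ) (lam : K) :=
  I1 K ⧸ Msub K n lam

section Weight

variable (K : Type) [Field K] [CharZero K]
variable (M : Type) [AddCommGroup M] [Module K M] [Module (I1 K) M] [IsScalarTower K (I1 K) M]

noncomputable instance : SMulCommClass (I1 K) K M := SMulCommClass.symm K (I1 K) M

/-- The generalized weight space `M^λ = {m ∈ M : (H-λ)^k m = 0 for some k}`. -/
noncomputable def genWeightSpace (lam : K) : Submodule K M :=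
  ⨆ k : ℕ,
    LinearMap.ker (DistribMulAction.toLinearMap K M ((Hop K - algebraMap K (I1 K) lam) ^ k))

/-- `M` is a generalized weight module if `M = ⊕_{λ∈K} M^λ`. -/
def IsGenWeightModule : Prop :=
  letI := Classical.decEq K
  DirectSum.IsInternal fun lam : K => genWeightSpace K M lam

/-- The support of `M`: the set of `λ ∈ K` with `M^λ ≠ 0`. -/
noncomputable def suppSet : Set K := {lam : K | genWeightSpace K M lam ≠ ⊥}

end Weight

section Mod

variable (K : Type) [Field K] [CharZero K]
variable (M : Type) [AddCommGroup M] [Module (I1 K) M]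

/-- `M` is indecomposable: it is not the direct sum of two nonzero submodules. -/
def IsIndecomposableMod : Prop :=
  ¬ ∃ N₁ N₂ : Submodule (I1 K) M, N₁ ≠ ⊥ ∧ N₂ ≠ ⊥ ∧ IsCompl N₁ N₂

/-- The submodule `FM` of `M`. -/
noncomputable def FMsub : Submodule (I1 K) M :=
  Submodule.span (I1 K) {m : M | ∃ f ∈ Fideal K, ∃ x : M, m = f • x}

/-- `M` has length `n`: there is a composition series `⊥ = M₀ ⋖ ⋯ ⋖ Mₙ = ⊤`. -/
def HasLength (n : ℕ) : Prop :=
  ∃ s : CompositionSeries (Submodule (I1 K) M), s.head = ⊥ ∧ s.last = ⊤ ∧ s.length = n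

end Mod

/-!
`K[x]` is a projective `I₁`-module, so every short exact sequence ending in it splits.
Indeed `e = 1 - ∫∂` acts on `K[x]` as `p ↦ p(0)`, so `p ↦ p(x) · e` embeds `K[x]` into `I₁`
as the direct summand `I₁e`, with retraction `a ↦ a • 1`.
-/

namespace I1

variable {K : Type} [Field K] [CharZero K]

theorem smul_def (a : I1 K) (p : K[X]) : a • p = (a : Module.End K K[X]) p := rfl

theorem intOp_monomial (n : ℕ) (c : K) :
    intOp K (monomial n c) = monomial (n + 1) (c / (n + 1)) := by
  rw [intOp, lsum_apply, sum_monomial_index _ _ (by simp)]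
  simp [div_eq_inv_mul, ← C_mul_monomial, smul_eq_C_mul]

theorem intOp_derivative (p : K[X]) : intOp K (derivative p) = p - C (p.coeff 0) := by
  induction p using Polynomial.induction_on' with
  | add p q hp hq => rw [derivative_add, map_add, hp, hq, coeff_add, C_add]; ring
  | monomial n c =>
    cases n with
    | zero => simp [intOp]
    | succ k =>
      have hk : (k : K) + 1 ≠ 0 := k.cast_add_one_ne_zero
      rw [derivative_monomial, intOp_monomial, coeff_monomial, if_neg k.succ_ne_zero]
      simp [hk]

theorem eElt_apply (p : K[X]) : (eElt K : Module.End K K[X]) p = C (p.coeff 0) := by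
  change p - intOp K (derivative p) = _
  rw [intOp_derivative, sub_sub_cancel]

noncomputable def xElt : I1 K := ⟨xOp K, Algebra.subset_adjoin (by simp)⟩

theorem aeval_xElt_apply (p q : K[X]) :
    ((aeval (xElt (K := K)) p : I1 K) : Module.End K K[X]) q = p * q := by
  rw [← Subalgebra.coe_val, ← aeval_algHom_apply]
  change aeval (Algebra.lmul K K[X] X) p q = p * q
  rw [aeval_algHom_apply, aeval_X_left_apply]
  rfl

noncomputable def polyToI1 : K[X] →ₗ[I1 K] I1 K where
  toFun p := aeval xElt p * eElt K
  map_add' p q := by rw [map_add, add_mul]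
  map_smul' a p := by
    refine Subtype.ext <| LinearMap.ext fun q => ?_
    change ((aeval xElt (a • p) : I1 K) : Module.End K K[X]) (eElt K • q)
      = (a : Module.End K K[X]) (((aeval xElt p : I1 K) : Module.End K K[X]) (eElt K • q))
    -- both sides are `q(0) • (a • p)`
    rw [smul_def (eElt K), eElt_apply, aeval_xElt_apply, aeval_xElt_apply, mul_comm,
      C_mul', mul_comm, C_mul', ← smul_def a, smul_comm]

theorem polyToI1_smul_one (p : K[X]) : polyToI1 p • (1 : K[X]) = p := by
  change ((aeval xElt p : I1 K) : Module.End K K[X]) ((eElt K : Module.End K K[X]) 1) = p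
  rw [eElt_apply, aeval_xElt_apply]
  simp

instance : Module.Projective (I1 K) K[X] :=
  .of_split polyToI1 (LinearMap.toSpanSingleton (I1 K) K[X] 1) <|
    LinearMap.ext polyToI1_smul_one

end I1

/-- Every short exact sequence of `I₁`-modules `0 → K[x] → N → K[x] → 0`
splits, and consequently `N ≅ K[x] ⊕ K[x]`; that is, `Ext¹(K[x], K[x]) = 0`. -/
theorem stmt_15 (K : Type) [Field K] [CharZero K]
    (N : Type) [AddCommGroup N] [Module (I1 K) N]
    (f : Polynomial K →ₗ[I1 K] N) (g : N →ₗ[I1 K] Polynomial K)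
    (hf : Function.Injective f) (hg : Function.Surjective g)
    (hfg : LinearMap.range f = LinearMap.ker g) :
    (∃ h : Polynomial K →ₗ[I1 K] N, g.comp h = LinearMap.id) ∧
    Nonempty (N ≃ₗ[I1 K] (Polynomial K × Polynomial K)) := by
  obtain ⟨h, hgh⟩ := Module.projective_lifting_property g LinearMap.id hg
  have hexact : Function.Exact f g := LinearMap.exact_iff.mpr hfg.symm
  exact ⟨⟨h, hgh⟩, ⟨(hexact.splitSurjectiveEquiv hf ⟨h, hgh⟩).1⟩⟩
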